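/- arXiv:1809.08195 — 2 statements merged into one kernel-verified Lean document; each statement's English description precedes it below -/
import Mathlib

section
/- The first-fit bin packing algorithm is a 2-approximation: for any list of item sizes each in (0, C], the number of bins of capacity C opened by first-fit is less than twice the optimal number of bins, i.e., FF ≤ 2·OPT (equivalently, FF < 2·OPT + 1). -/
/-- Insert an item of size `s` into the first bin (given by its current load)
where it fits within capacity `C`; open a new bin otherwise. -/
def ffInsert (C s : ℚ) : List ℚ → List ℚ
  | [] => [s]
  | l :: ls => if l + s ≤ C then (l + s) :: ls else l :: ffInsert C s ls

/-- First-fit packing: process the items in order, returning the list of bin loads. -/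
def firstFit (C : ℚ) (items : List ℚ) : List ℚ :=
  items.foldl (fun bins s => ffInsert C s bins) []

/-- `items` can be validly packed into `k` bins of capacity `C`. -/
def ValidPacking (C : ℚ) (items : List ℚ) (k : ℕ) : Prop :=
  ∃ f : Fin items.length → Fin k,
    ∀ j : Fin k,
      (((List.finRange items.length).filter (fun i => f i = j)).map
        (fun i => items.get i)).sum ≤ C


/-!
First fit opens a new bin only for an item that fits into none of the open bins, and loads only
grow afterwards. So any two bins have loads summing to more than `C`: the first item of the later
bin did not fit into the earlier one. Pairing off the bins, `2k + 1` bins would carry more than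
`k·C`, whereas a packing into `k` bins shows that the items weigh at most `k·C`.
-/

section Counting

variable {α : Type*} [AddCommGroup α] [LinearOrder α] [IsOrderedAddMonoid α]

theorem List.length_le_two_mul_of_pairwise_lt_add {C : α} :
    ∀ {l : List α} {k : ℕ}, (∀ b ∈ l, 0 < b) → l.Pairwise (fun x y => C < x + y) →
      l.sum ≤ k • C → l.length ≤ 2 * k
  | [], _, _, _, _ => Nat.zero_le _
  | [a], 0, hpos, _, hsum => absurd (by simpa using hsum) (not_le.2 (hpos a (by simp)))
  | [_], _ + 1, _, _, _ => by rw [List.length_singleton]; omega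
  | a :: b :: l, k, hpos, hpair, hsum => by
    have hab : C < a + b := (List.pairwise_cons.1 hpair).1 b (by simp)
    have hab_pos : 0 < a + b := add_pos (hpos a (by simp)) (hpos b (by simp))
    have hl : 0 ≤ l.sum := List.sum_nonneg fun x hx => (hpos x (by simp [hx])).le
    have hsum' : a + b + l.sum ≤ k • C := by simpa [add_assoc] using hsum
    obtain _ | k := k
    · exact absurd hsum' (not_le.2 (by simpa using add_pos_of_pos_of_nonneg hab_pos hl))
    have hl_le : l.sum ≤ k • C := by
      by_contra! h
      exact absurd hsum' (not_le.2 (by simpa [succ_nsmul, add_comm] using add_lt_add h hab))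
    have := List.length_le_two_mul_of_pairwise_lt_add
      (fun x hx => hpos x (by simp [hx])) hpair.of_cons.of_cons hl_le
    simp only [List.length_cons]
    omega

end Counting

section FirstFit

variable {C s : ℚ}

theorem ffInsert_sum (l : List ℚ) : (ffInsert C s l).sum = l.sum + s := by
  induction l with
  | nil => simp [ffInsert]
  | cons a l ih =>
    by_cases h : a + s ≤ C <;> simp only [ffInsert, h, if_true, if_false, List.sum_cons, ih] <;> ring

theorem exists_le_of_mem_ffInsert (hs : 0 ≤ s) {l : List ℚ} {b : ℚ} (hb : b ∈ ffInsert C s l) :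
    b = s ∨ ∃ b' ∈ l, b' ≤ b := by
  induction l with
  | nil => simpa [ffInsert] using hb
  | cons a l ih =>
    by_cases h : a + s ≤ C
    · simp only [ffInsert, h, if_true, List.mem_cons] at hb
      rcases hb with rfl | hb
      · exact .inr ⟨a, by simp, by linarith⟩
      · exact .inr ⟨b, by simp [hb], le_rfl⟩
    · simp only [ffInsert, h, if_false, List.mem_cons] at hb
      rcases hb with rfl | hb
      · exact .inr ⟨b, by simp, le_rfl⟩
      · exact (ih hb).imp_right fun ⟨b', hb', hle⟩ => ⟨b', by simp [hb'], hle⟩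

theorem pos_of_mem_ffInsert (hs : 0 < s) {l : List ℚ} (hl : ∀ b ∈ l, 0 < b) :
    ∀ b ∈ ffInsert C s l, 0 < b := fun b hb => by
  rcases exists_le_of_mem_ffInsert hs.le hb with rfl | ⟨b', hb', hle⟩
  · exact hs
  · exact (hl b' hb').trans_le hle

theorem pairwise_ffInsert (hs : 0 ≤ s) {l : List ℚ} (hl : l.Pairwise (fun x y => C < x + y)) :
    (ffInsert C s l).Pairwise (fun x y => C < x + y) := by
  induction l with
  | nil => simp [ffInsert]
  | cons a l ih =>
    rw [List.pairwise_cons] at hl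
    by_cases h : a + s ≤ C
    · simp only [ffInsert, h, if_true, List.pairwise_cons]
      exact ⟨fun b hb => (hl.1 b hb).trans_le (by linarith), hl.2⟩
    · simp only [ffInsert, h, if_false, List.pairwise_cons]
      refine ⟨fun b hb => ?_, ih hl.2⟩
      -- `b` is either the new bin `s`, which did not fit into `a`, or at least an old load
      rcases exists_le_of_mem_ffInsert hs hb with rfl | ⟨b', hb', hle⟩
      · exact not_le.1 h
      · exact (hl.1 b' hb').trans_le (by linarith)

theorem firstFit_append_singleton (items : List ℚ) :
    firstFit C (items ++ [s]) = ffInsert C s (firstFit C items) := by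
  simp [firstFit, List.foldl_append]

theorem firstFit_sum (items : List ℚ) : (firstFit C items).sum = items.sum := by
  induction items using List.reverseRecOn with
  | nil => rfl
  | append_singleton items s ih => simp [firstFit_append_singleton, ffInsert_sum, ih]

theorem pos_of_mem_firstFit {items : List ℚ} (hitems : ∀ s ∈ items, 0 < s) :
    ∀ b ∈ firstFit C items, 0 < b := by
  induction items using List.reverseRecOn with
  | nil => simp [firstFit]
  | append_singleton items s ih =>
    rw [firstFit_append_singleton]
    exact pos_of_mem_ffInsert (hitems s (by simp)) (ih fun t ht => hitems t (by simp [ht]))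

theorem pairwise_firstFit {items : List ℚ} (hitems : ∀ s ∈ items, 0 ≤ s) :
    (firstFit C items).Pairwise (fun x y => C < x + y) := by
  induction items using List.reverseRecOn with
  | nil => simp [firstFit]
  | append_singleton items s ih =>
    rw [firstFit_append_singleton]
    exact pairwise_ffInsert (hitems s (by simp)) (ih fun t ht => hitems t (by simp [ht]))

end FirstFit

theorem ValidPacking.sum_le {C : ℚ} {items : List ℚ} {k : ℕ} (h : ValidPacking C items k) :
    items.sum ≤ k * C := by
  obtain ⟨f, hf⟩ := h
  have hbin : ∀ j, ∑ i with f i = j, items.get i ≤ C := fun j => by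
    have := hf j
    rw [← List.sum_toFinset _ ((List.nodup_finRange _).filter _), List.toFinset_filter,
      List.toFinset_finRange] at this
    simpa using this
  calc items.sum = ∑ j, ∑ i with f i = j, items.get i := by
        rw [Finset.sum_fiberwise]; exact (Fin.sum_univ_getElem items).symm
    _ ≤ ∑ _j : Fin k, C := Finset.sum_le_sum fun j _ => hbin j
    _ = k * C := by simp

theorem firstFit_two_approx_general (C : ℚ) (items : List ℚ)
    (hitems : ∀ s ∈ items, 0 < s ∧ s ≤ C)
    (k : ℕ) (hk : ValidPacking C items k) :
    (firstFit C items).length ≤ 2 * k := by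
  refine List.length_le_two_mul_of_pairwise_lt_add (pos_of_mem_firstFit fun s hs => (hitems s hs).1)
    (pairwise_firstFit fun s hs => (hitems s hs).1.le) ?_
  rw [firstFit_sum, nsmul_eq_mul]
  exact hk.sum_le

/-- First-fit is a 2-approximation: `FF ≤ 2·OPT`. -/
theorem firstFit_two_approx (C : ℚ) (hC : 0 < C) (items : List ℚ)
    (hitems : ∀ s ∈ items, 0 < s ∧ s ≤ C)
    (k : ℕ) (hk : ValidPacking C items k) :
    (firstFit C items).length ≤ 2 * k :=
  firstFit_two_approx_general C items hitems k hk
end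

section
/- If every internal node of a rooted ternary tree of depth k (with leaves at depth 0 being inputs) is a majority gate, then the tree function can be evaluated by a register machine with 2(k+1) registers, where each step either loads an input (possibly negated) into a register, copies/negates a register, or overwrites a register r with Maj(r, a, ¬b) for registers or inputs a, b. -/
def Maj (a b c : Bool) : Bool := (a && b) || (b && c) || (a && c)

/-- A ternary majority tree over `n` Boolean inputs. Leaves are input
literals (variable with a possible negation flag). -/
inductive MTree (n : ℕ) where
  | leaf : Fin n → Bool → MTree n
  | node : MTree n → MTree n → MTree n → MTree n

def MTree.eval {n : ℕ} (x : Fin n → Bool) : MTree n → Bool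
  | .leaf i neg => xor (x i) neg
  | .node a b c => Maj (a.eval x) (b.eval x) (c.eval x)

def MTree.depth {n : ℕ} : MTree n → ℕ
  | .leaf _ _ => 0
  | .node a b c => 1 + max a.depth (max b.depth c.depth)

/-- An operand for a register-machine step: a register or an input literal. -/
inductive Opd (n R : ℕ) where
  | reg : Fin R → Opd n R
  | inp : Fin n → Bool → Opd n R

def Opd.eval {n R : ℕ} (x : Fin n → Bool) (st : Fin R → Bool) : Opd n R → Bool
  | .reg r => st r
  | .inp i neg => xor (x i) neg

/-- A register-machine step: load an input literal into a register, copy the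
negation of a register, or the ReRAM update `r ← Maj(r, a, ¬b)`. -/
inductive Step (n R : ℕ) where
  | load : Fin R → Fin n → Bool → Step n R
  | copyneg : Fin R → Fin R → Step n R
  | maj : Fin R → Opd n R → Opd n R → Step n R

def applyStep {n R : ℕ} (x : Fin n → Bool) (st : Fin R → Bool) : Step n R → (Fin R → Bool)
  | .load r i neg => Function.update st r (xor (x i) neg)
  | .copyneg r r' => Function.update st r (!(st r'))
  | .maj r a b => Function.update st r (Maj (st r) (a.eval x st) (!(b.eval x st)))

def runSteps {n R : ℕ} (x : Fin n → Bool) (steps : List (Step n R))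
    (st : Fin R → Bool) : Fin R → Bool :=
  steps.foldl (applyStep x) st

/-!
Evaluate the tree bottom-up, keeping each subtree's value in a register of a shrinking pool.
At a node, evaluate the first child into `r`, the third child into a scratch register `s`,
stash its negation in `w`, evaluate the second child into `s`, and finish with
`r ← Maj(r, s, ¬w) = Maj(a, b, c)`. Each level of depth permanently occupies two registers
(`r` and `w`) while the remaining children are evaluated, so depth `d` needs `2d + 1` registers.
-/

variable {n R : ℕ}

def Step.dest : Step n R → Fin R
  | .load r _ _ => r
  | .copyneg r _ => r
  | .maj r _ _ => r

lemma applyStep_of_ne_dest (x : Fin n → Bool) (st : Fin R → Bool) (s : Step n R) {q : Fin R}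
    (hq : q ≠ s.dest) : applyStep x st s q = st q := by
  cases s <;> exact Function.update_of_ne hq _ _

lemma runSteps_append (x : Fin n → Bool) (P Q : List (Step n R)) (st : Fin R → Bool) :
    runSteps x (P ++ Q) st = runSteps x Q (runSteps x P st) :=
  List.foldl_append

lemma runSteps_singleton (x : Fin n → Bool) (s : Step n R) (st : Fin R → Bool) :
    runSteps x [s] st = applyStep x st s :=
  rfl

def Preserves (P : List (Step n R)) (S : Finset (Fin R)) : Prop :=
  ∀ x st q, q ∉ S → runSteps x P st q = st q

namespace Preserves

lemma append {P Q : List (Step n R)} {S : Finset (Fin R)} (hP : Preserves P S)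
    (hQ : Preserves Q S) : Preserves (P ++ Q) S := fun x st q hq => by
  rw [runSteps_append, hQ x _ q hq, hP x st q hq]

lemma mono {P : List (Step n R)} {S T : Finset (Fin R)} (hP : Preserves P S) (hST : S ⊆ T) :
    Preserves P T :=
  fun x st q hq => hP x st q fun h => hq (hST h)

lemma singleton {s : Step n R} {S : Finset (Fin R)} (hs : s.dest ∈ S) : Preserves [s] S :=
  fun x st _ hq => applyStep_of_ne_dest x st s fun h => hq (h ▸ hs)

end Preserves

structure Computes (P : List (Step n R)) (S : Finset (Fin R)) (r : Fin R)
    (f : (Fin n → Bool) → Bool) : Prop where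
  preserves : Preserves P S
  eval : ∀ x st, runSteps x P st r = f x

lemma Computes.load {S : Finset (Fin R)} {r : Fin R} (hr : r ∈ S) (i : Fin n) (neg : Bool) :
    Computes [.load r i neg] S r fun x => xor (x i) neg where
  preserves := .singleton hr
  eval _ _ := Function.update_self ..

/-- The register `w` keeps `¬fc` while `s` is reused for `fb`; the final step negates it back. -/
lemma Computes.maj {P Q Q' : List (Step n R)} {S SA SB : Finset (Fin R)} {r s w : Fin R}
    {fa fb fc : (Fin n → Bool) → Bool} (hr : r ∈ S) (hw : w ∈ S) (hrw : r ≠ w)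
    (hSA : SA ⊆ S) (hSB : SB ⊆ S) (hrSB : r ∉ SB) (hwSB : w ∉ SB)
    (hP : Computes P SA r fa) (hQ : Computes Q SB s fb) (hQ' : Computes Q' SB s fc) :
    Computes (P ++ Q' ++ [.copyneg w s] ++ Q ++ [.maj r (.reg s) (.reg w)]) S r
      fun x => Maj (fa x) (fb x) (fc x) where
  preserves :=
    (((hP.preserves.mono hSA).append (hQ'.preserves.mono hSB)).append
      (.singleton (s := .copyneg w s) hw)).append (hQ.preserves.mono hSB) |>.append
      (.singleton (s := .maj r _ _) hr)
  eval x st := by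
    set st₁ := runSteps x P st
    set st₂ := runSteps x Q' st₁
    set st₃ := applyStep x st₂ (.copyneg w s)
    set st₄ := runSteps x Q st₃
    have hr₄ : st₄ r = fa x :=
      calc st₄ r = st₂ r := (hQ.preserves x st₃ r hrSB).trans (applyStep_of_ne_dest x st₂ _ hrw)
        _ = fa x := (hQ'.preserves x st₁ r hrSB).trans (hP.eval x st)
    have hs₄ : st₄ s = fb x := hQ.eval x st₃
    have hw₄ : st₄ w = !fc x :=
      calc st₄ w = !st₂ s := (hQ.preserves x st₃ w hwSB).trans (Function.update_self ..)
        _ = !fc x := congrArg _ (hQ'.eval x st₁)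
    simp only [runSteps_append, runSteps_singleton, applyStep, Opd.eval, Function.update_self]
    change Maj (st₄ r) (st₄ s) (!st₄ w) = _
    rw [hr₄, hs₄, hw₄, Bool.not_not]

theorem MTree.exists_computes (t : MTree n) {S : Finset (Fin R)} {r : Fin R} (hr : r ∈ S)
    (hS : 2 * t.depth + 1 ≤ S.card) : ∃ P, Computes P S r t.eval := by
  induction t generalizing S r with
  | leaf i neg => exact ⟨_, Computes.load hr i neg⟩
  | node a b c iha ihb ihc =>
    simp only [MTree.depth] at hS
    have hcard : (S.erase r).card = S.card - 1 := Finset.card_erase_of_mem hr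
    obtain ⟨s, hs, w, hw, hsw⟩ := Finset.one_lt_card.mp (show 1 < (S.erase r).card by omega)
    obtain ⟨hwr, hwS⟩ := Finset.mem_erase.mp hw
    obtain ⟨hsr, hsS⟩ := Finset.mem_erase.mp hs
    have hcardA : ((S.erase s).erase w).card = S.card - 2 := by
      rw [Finset.card_erase_of_mem (Finset.mem_erase.mpr ⟨hsw.symm, hwS⟩),
        Finset.card_erase_of_mem hsS]; omega
    have hcardB : ((S.erase r).erase w).card = S.card - 2 := by
      rw [Finset.card_erase_of_mem hw, hcard]; omega
    have hrA : r ∈ (S.erase s).erase w := by simp [hr, hsr.symm, hwr.symm]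
    have hsB : s ∈ (S.erase r).erase w := by simp [hsS, hsr, hsw]
    obtain ⟨PA, hPA⟩ := iha hrA (by omega)
    obtain ⟨PB, hPB⟩ := ihb hsB (by omega)
    obtain ⟨PC, hPC⟩ := ihc hsB (by omega)
    have hAS : (S.erase s).erase w ⊆ S := (Finset.erase_subset ..).trans (Finset.erase_subset ..)
    have hBS : (S.erase r).erase w ⊆ S := (Finset.erase_subset ..).trans (Finset.erase_subset ..)
    exact ⟨_, .maj hr hwS hwr.symm hAS hBS (by simp) (by simp) hPA hPB hPC⟩

/-- Any majority tree of depth `k` can be evaluated with `2(k+1)` registers. -/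
theorem mtree_registers (n k : ℕ) (t : MTree n) (ht : t.depth = k) :
    ∃ (steps : List (Step n (2 * (k + 1)))) (r : Fin (2 * (k + 1))),
      ∀ x : Fin n → Bool,
        runSteps x steps (fun _ => false) r = t.eval x := by
  have hS : 2 * t.depth + 1 ≤ (Finset.univ : Finset (Fin (2 * (k + 1)))).card := by
    rw [Finset.card_univ, Fintype.card_fin]; omega
  obtain ⟨P, hP⟩ := t.exists_computes (Finset.mem_univ ⟨0, by omega⟩) hS
  exact ⟨P, _, fun x => hP.eval x _⟩
end
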